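/- arXiv:2003.02330 — 3 statements merged into one kernel-verified Lean document; each statement's English description precedes it below -/
import Mathlib

section
/- Let ε > 0, λ ∈ ℝ, Λ := λ·A + ε·I, and let C be any real 2×2 matrix. Then the integrand satisfies exp(-rΛ)·C·exp(-rΛᵀ) = e^{-2εr}·exp(-λrA)·C·exp(λrA) for all r ≥ 0, the integral J := ∫₀^∞ exp(-rΛ)·C·exp(-rΛᵀ) dr converges, and J is the unique real 2×2 matrix solving the Lyapunov equation Λ·J + J·Λᵀ = C. -/
/-!
Write `Λ = ε • 1 + S` with `S` skew-symmetric. Then `exp (-r • S)` is orthogonal, so in the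
operator 2-norm the flow `F r = exp (-r • Λ) * C * exp (-r • Λᵀ)` has norm exactly
`e^{-2εr} ‖C‖`: it is integrable on `(0, ∞)` and tends to `0`. As `F' = -(Λ F + F Λᵀ)`,
integrating over `(0, ∞)` gives `Λ J + J Λᵀ = F 0 = C`. If `Λ X + X Λᵀ = 0`, the flow started
at `X` has zero derivative, so it is constantly `X`; since it tends to `0`, `X = 0`.
-/

open Matrix

noncomputable def matA : Matrix (Fin 2) (Fin 2) ℝ := !![0, 1; -1, 0]

open MeasureTheory Filter Set Topology

section BanachAlgebra

variable {𝔸 : Type*} [NormedRing 𝔸] [NormedAlgebra ℝ 𝔸]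

noncomputable def lyapunovFlow (Λ Λ' C : 𝔸) (r : ℝ) : 𝔸 :=
  NormedSpace.exp (-r • Λ) * C * NormedSpace.exp (-r • Λ')

theorem lyapunovFlow_zero (Λ Λ' C : 𝔸) : lyapunovFlow Λ Λ' C 0 = C := by
  simp [lyapunovFlow]

variable [CompleteSpace 𝔸]

theorem NormedSpace.exp_smul_one_add (x : ℝ) (a : 𝔸) :
    NormedSpace.exp (x • (1 : 𝔸) + a) = Real.exp x • NormedSpace.exp a := by
  let +nondep : NormedAlgebra ℚ 𝔸 := .restrictScalars ℚ ℝ 𝔸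
  rw [NormedSpace.exp_add_of_commute ((Commute.one_left a).smul_left x),
    ← Algebra.algebraMap_eq_smul_one, ← NormedSpace.algebraMap_exp_comm, ← Real.exp_eq_exp_ℝ,
    Algebra.smul_def]

theorem lyapunovFlow_smul_one_add (ε : ℝ) (s s' C : 𝔸) (r : ℝ) :
    lyapunovFlow (ε • 1 + s) (ε • 1 + s') C r =
      Real.exp (-(2 * ε * r)) • lyapunovFlow s s' C r := by
  have hsplit : ∀ a : 𝔸, -r • (ε • 1 + a) = (-(ε * r)) • (1 : 𝔸) + -r • a := fun a => by
    rw [smul_add, smul_smul]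
    ring_nf
  rw [lyapunovFlow, hsplit, hsplit, NormedSpace.exp_smul_one_add, NormedSpace.exp_smul_one_add,
    smul_mul_assoc, smul_mul_assoc, mul_smul_comm, smul_smul, ← Real.exp_add, lyapunovFlow]
  ring_nf

theorem hasDerivAt_lyapunovFlow (Λ Λ' C : 𝔸) (r : ℝ) :
    HasDerivAt (lyapunovFlow Λ Λ' C)
      (-(Λ * lyapunovFlow Λ Λ' C r + lyapunovFlow Λ Λ' C r * Λ')) r := by
  have hL : HasDerivAt (fun t : ℝ => NormedSpace.exp (-t • Λ))
      (-Λ * NormedSpace.exp (-r • Λ)) r := by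
    simpa only [neg_smul, smul_neg] using hasDerivAt_exp_smul_const' (-Λ) r
  have hR : HasDerivAt (fun t : ℝ => NormedSpace.exp (-t • Λ'))
      (NormedSpace.exp (-r • Λ') * -Λ') r := by
    simpa only [neg_smul, smul_neg] using hasDerivAt_exp_smul_const (-Λ') r
  refine ((hL.mul_const C).mul hR).congr_deriv ?_
  simp only [lyapunovFlow]
  noncomm_ring

theorem integral_lyapunovFlow_solves {Λ Λ' C : 𝔸}
    (hint : IntegrableOn (lyapunovFlow Λ Λ' C) (Ioi 0))
    (hlim : Tendsto (lyapunovFlow Λ Λ' C) atTop (𝓝 0)) :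
    Λ * (∫ r in Ioi 0, lyapunovFlow Λ Λ' C r) + (∫ r in Ioi 0, lyapunovFlow Λ Λ' C r) * Λ' = C := by
  let L : 𝔸 →L[ℝ] 𝔸 := ContinuousLinearMap.mul ℝ 𝔸 Λ + (ContinuousLinearMap.mul ℝ 𝔸).flip Λ'
  have hFTC := integral_Ioi_of_hasDerivAt_of_tendsto
    (hasDerivAt_lyapunovFlow Λ Λ' C 0).continuousAt.continuousWithinAt
    (fun r _ => hasDerivAt_lyapunovFlow Λ Λ' C r) (L.integrable_comp hint).neg hlim
  have hL : ∫ r in Ioi 0, (Λ * lyapunovFlow Λ Λ' C r + lyapunovFlow Λ Λ' C r * Λ') =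
      Λ * (∫ r in Ioi 0, lyapunovFlow Λ Λ' C r) + (∫ r in Ioi 0, lyapunovFlow Λ Λ' C r) * Λ' :=
    L.integral_comp_comm hint
  rwa [integral_neg, hL, lyapunovFlow_zero, zero_sub, neg_inj] at hFTC

theorem eq_zero_of_lyapunov_eq_zero {Λ Λ' X : 𝔸} (hX : Λ * X + X * Λ' = 0)
    (hlim : Tendsto (lyapunovFlow Λ Λ' X) atTop (𝓝 0)) : X = 0 := by
  have hderiv : ∀ r, Λ * lyapunovFlow Λ Λ' X r + lyapunovFlow Λ Λ' X r * Λ' = 0 := by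
    intro r
    have hc : Commute Λ (NormedSpace.exp (-r • Λ)) := ((Commute.refl Λ).smul_right _).exp_right
    have hc' : Commute Λ' (NormedSpace.exp (-r • Λ')) :=
      ((Commute.refl Λ').smul_right _).exp_right
    calc Λ * lyapunovFlow Λ Λ' X r + lyapunovFlow Λ Λ' X r * Λ'
        = NormedSpace.exp (-r • Λ) * (Λ * X + X * Λ') * NormedSpace.exp (-r • Λ') := by
          simp only [lyapunovFlow, mul_add, add_mul, mul_assoc, hc.left_comm, hc'.eq]
      _ = 0 := by rw [hX, mul_zero, zero_mul]
  have hconst : ∀ r, lyapunovFlow Λ Λ' X r = X := fun r => by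
    refine (is_const_of_deriv_eq_zero
      (fun t => (hasDerivAt_lyapunovFlow Λ Λ' X t).differentiableAt) (fun t => ?_) r 0).trans
      (lyapunovFlow_zero Λ Λ' X)
    rw [(hasDerivAt_lyapunovFlow Λ Λ' X t).deriv, hderiv, neg_zero]
  exact tendsto_nhds_unique (tendsto_const_nhds.congr fun r => (hconst r).symm) hlim

section CStarRing

variable [StarRing 𝔸] [CStarRing 𝔸] [StarModule ℝ 𝔸] {ε : ℝ} {s s' : 𝔸}

theorem norm_lyapunovFlow_smul_one_add (hs : s ∈ skewAdjoint 𝔸) (hs' : s' ∈ skewAdjoint 𝔸)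
    (ε : ℝ) (C : 𝔸) (r : ℝ) :
    ‖lyapunovFlow (ε • 1 + s) (ε • 1 + s') C r‖ = ‖C‖ * Real.exp (-(2 * ε * r)) := by
  let +nondep : NormedAlgebra ℚ 𝔸 := .restrictScalars ℚ ℝ 𝔸
  have hu : ∀ a ∈ skewAdjoint 𝔸, NormedSpace.exp (-r • a) ∈ unitary 𝔸 := fun a ha =>
    NormedSpace.exp_mem_unitary_of_mem_skewAdjoint (skewAdjoint.smul_mem _ ha)
  rw [lyapunovFlow_smul_one_add, norm_smul, lyapunovFlow,
    CStarRing.norm_mul_mem_unitary _ (hu s' hs'), CStarRing.norm_mem_unitary_mul _ (hu s hs),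
    Real.norm_eq_abs, Real.abs_exp, mul_comm]

theorem integrableOn_lyapunovFlow_smul_one_add (hε : 0 < ε) (hs : s ∈ skewAdjoint 𝔸)
    (hs' : s' ∈ skewAdjoint 𝔸) (C : 𝔸) :
    IntegrableOn (lyapunovFlow (ε • 1 + s) (ε • 1 + s') C) (Ioi 0) := by
  refine Integrable.mono'
    ((exp_neg_integrableOn_Ioi 0 (by positivity : 0 < 2 * ε)).const_mul ‖C‖)
    (continuous_iff_continuousAt.2 fun r =>
      (hasDerivAt_lyapunovFlow _ _ C r).continuousAt).aestronglyMeasurable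
    (ae_of_all _ fun r => ?_)
  rw [norm_lyapunovFlow_smul_one_add hs hs', neg_mul]

theorem tendsto_lyapunovFlow_smul_one_add (hε : 0 < ε) (hs : s ∈ skewAdjoint 𝔸)
    (hs' : s' ∈ skewAdjoint 𝔸) (C : 𝔸) :
    Tendsto (lyapunovFlow (ε • 1 + s) (ε • 1 + s') C) atTop (𝓝 0) := by
  have hexp : Tendsto (fun r => ‖C‖ * Real.exp (-(2 * ε * r))) atTop (𝓝 (‖C‖ * 0)) :=
    (Real.tendsto_exp_neg_atTop_nhds_zero.comp
      (tendsto_id.const_mul_atTop (by positivity : 0 < 2 * ε))).const_mul _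
  rw [mul_zero] at hexp
  exact squeeze_zero_norm (fun r => (norm_lyapunovFlow_smul_one_add hs hs' ε C r).le) hexp

end CStarRing

end BanachAlgebra

namespace Matrix

theorem mem_skewAdjoint_of_transpose_eq_neg {n : Type*} {s : Matrix n n ℝ} (hs : sᵀ = -s) :
    s ∈ skewAdjoint (Matrix n n ℝ) := by
  rw [skewAdjoint.mem_iff, star_eq_conjTranspose, conjTranspose_eq_transpose_of_trivial, hs]

/- The operator 2-norm makes real square matrices a C⋆-ring, in which the exponential of a
skew-symmetric matrix is unitary. -/
open scoped Matrix.Norms.L2Operator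

section Entries

variable {m n X : Type*} [Fintype m] [Fintype n] [DecidableEq n] [MeasurableSpace X]
  {μ : Measure X} {F : X → Matrix m n ℝ}

theorem integrable_apply (hF : Integrable F μ) (i : m) (j : n) :
    Integrable (fun x => F x i j) μ :=
  (entryLinearMap ℝ ℝ i j).toContinuousLinearMap.integrable_comp hF

theorem integral_apply (hF : Integrable F μ) (i : m) (j : n) :
    (∫ x, F x ∂μ) i j = ∫ x, F x i j ∂μ :=
  ((entryLinearMap ℝ ℝ i j).toContinuousLinearMap.integral_comp_comm hF).symm

end Entries

variable {n : Type*} [Fintype n] [DecidableEq n] {ε : ℝ} {s s' : Matrix n n ℝ}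

theorem lyapunovFlow_smul_one_add (ε : ℝ) (s s' C : Matrix n n ℝ) (r : ℝ) :
    lyapunovFlow (ε • 1 + s) (ε • 1 + s') C r =
      Real.exp (-(2 * ε * r)) •
        (NormedSpace.exp (-r • s) * C * NormedSpace.exp (-r • s')) :=
  _root_.lyapunovFlow_smul_one_add ε s s' C r

theorem integrableOn_lyapunovFlow_apply (hε : 0 < ε) (hs : sᵀ = -s) (hs' : s'ᵀ = -s')
    (C : Matrix n n ℝ) (i j : n) :
    IntegrableOn (fun r => lyapunovFlow (ε • 1 + s) (ε • 1 + s') C r i j) (Ioi 0) :=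
  integrable_apply (integrableOn_lyapunovFlow_smul_one_add hε
    (mem_skewAdjoint_of_transpose_eq_neg hs) (mem_skewAdjoint_of_transpose_eq_neg hs') C) i j

theorem integral_lyapunovFlow_apply_solves (hε : 0 < ε) (hs : sᵀ = -s) (hs' : s'ᵀ = -s')
    (C : Matrix n n ℝ) :
    (ε • 1 + s) * of (fun i j => ∫ r in Ioi 0, lyapunovFlow (ε • 1 + s) (ε • 1 + s') C r i j) +
      of (fun i j => ∫ r in Ioi 0, lyapunovFlow (ε • 1 + s) (ε • 1 + s') C r i j) * (ε • 1 + s')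
      = C := by
  have hs₀ := mem_skewAdjoint_of_transpose_eq_neg hs
  have hs₀' := mem_skewAdjoint_of_transpose_eq_neg hs'
  have hint := integrableOn_lyapunovFlow_smul_one_add hε hs₀ hs₀' C
  have hJ : of (fun i j => ∫ r in Ioi 0, lyapunovFlow (ε • 1 + s) (ε • 1 + s') C r i j) =
      ∫ r in Ioi 0, lyapunovFlow (ε • 1 + s) (ε • 1 + s') C r := by
    ext i j
    exact (integral_apply hint i j).symm
  rw [hJ]
  exact integral_lyapunovFlow_solves hint (tendsto_lyapunovFlow_smul_one_add hε hs₀ hs₀' C)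

theorem lyapunov_injective (hε : 0 < ε) (hs : sᵀ = -s) (hs' : s'ᵀ = -s') {X Y : Matrix n n ℝ}
    (h : (ε • 1 + s) * X + X * (ε • 1 + s') = (ε • 1 + s) * Y + Y * (ε • 1 + s')) : X = Y := by
  rw [← sub_eq_zero]
  refine eq_zero_of_lyapunov_eq_zero ?_ (tendsto_lyapunovFlow_smul_one_add hε
    (mem_skewAdjoint_of_transpose_eq_neg hs) (mem_skewAdjoint_of_transpose_eq_neg hs') _)
  rw [mul_sub, sub_mul, sub_add_sub_comm, h, sub_self]

end Matrix

/-- Let `ε > 0`, `λ ∈ ℝ`, `Λ := λ·A + ε·I`, and let `C` be any real 2×2 matrix.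
Then `exp(-rΛ)·C·exp(-rΛᵀ) = e^{-2εr}·exp(-λrA)·C·exp(λrA)` for all `r ≥ 0`, the
integral `J := ∫₀^∞ exp(-rΛ)·C·exp(-rΛᵀ) dr` converges (entrywise), and `J` is the
unique real 2×2 matrix solving the Lyapunov equation `Λ·J + J·Λᵀ = C`. -/
theorem lyapunov_integral (ε : ℝ) (hε : 0 < ε) (lam : ℝ)
    (C : Matrix (Fin 2) (Fin 2) ℝ)
    (Λ : Matrix (Fin 2) (Fin 2) ℝ)
    (hΛ : Λ = lam • matA + ε • (1 : Matrix (Fin 2) (Fin 2) ℝ)) :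
    (∀ r : ℝ, 0 ≤ r →
      NormedSpace.exp (-r • Λ) * C * NormedSpace.exp (-r • Λᵀ) =
        Real.exp (-(2 * ε * r)) •
          (NormedSpace.exp (-(lam * r) • matA) * C *
            NormedSpace.exp ((lam * r) • matA))) ∧
    (∀ i j : Fin 2,
      MeasureTheory.IntegrableOn
        (fun r : ℝ =>
          (NormedSpace.exp (-r • Λ) * C * NormedSpace.exp (-r • Λᵀ)) i j)
        (Set.Ioi (0 : ℝ))) ∧
    ∀ J : Matrix (Fin 2) (Fin 2) ℝ,
      J = Matrix.of (fun i j =>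
        ∫ r in Set.Ioi (0 : ℝ),
          (NormedSpace.exp (-r • Λ) * C * NormedSpace.exp (-r • Λᵀ)) i j) →
      (Λ * J + J * Λᵀ = C ∧
        ∀ J' : Matrix (Fin 2) (Fin 2) ℝ, Λ * J' + J' * Λᵀ = C → J' = J) := by
  have hA : matAᵀ = -matA := by
    ext i j
    fin_cases i <;> fin_cases j <;> simp [matA]
  have hs : (lam • matA)ᵀ = -(lam • matA) := by rw [transpose_smul, hA, smul_neg]
  have hs' : (-(lam • matA))ᵀ = -(-(lam • matA)) := by rw [transpose_neg, hs]
  have hΛT : Λᵀ = ε • 1 + -(lam • matA) := by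
    rw [hΛ, transpose_add, hs, transpose_smul, transpose_one, add_comm]
  rw [hΛT, hΛ, add_comm (lam • matA)]
  refine ⟨fun r _ => ?_, integrableOn_lyapunovFlow_apply hε hs hs' C, fun J hJ => ?_⟩
  · refine (Matrix.lyapunovFlow_smul_one_add ε _ _ C r).trans ?_
    have hL : -r • lam • matA = -(lam * r) • matA := by module
    have hR : -r • -(lam • matA) = (lam * r) • matA := by module
    rw [hL, hR]
  · subst hJ
    have hsol := integral_lyapunovFlow_apply_solves hε hs hs' C
    exact ⟨hsol, fun J' hJ' => lyapunov_injective hε hs hs' (hJ'.trans hsol.symm)⟩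
end

section
/- Let ε > 0, λ ∈ ℝ, and let C = [[a₁, a₀], [a₀, a₂]] be a symmetric real 2×2 matrix; set β₀ = (a₁+a₂)/4, β₁ = (a₁−a₂)/4, β₂ = a₀/2. Then the matrix J^ε := ∫₀^∞ exp(-λrA)·C·exp(λrA)·e^{-2εr} dr has entries J^ε₁₁ = β₀/ε + β₁·ε/(λ²+ε²) − β₂·λ/(λ²+ε²), J^ε₂₂ = β₀/ε − β₁·ε/(λ²+ε²) + β₂·λ/(λ²+ε²), and J^ε₁₂ = J^ε₂₁ = β₁·λ/(λ²+ε²) + β₂·ε/(λ²+ε²). -/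
/-!
`exp (θ • A)` is the rotation by `θ`: under `ℂ ≅ ℝ²`, `A` is multiplication by `-I`, so its
exponential is the image of `exp (-θ I)`. Conjugation by this rotation fixes the scalar part
`(tr C / 2) • 1` of a symmetric `C` and, because the traceless part `C₀` anticommutes with `A`,
turns `C₀` at double speed into `cos 2θ • C₀ + sin 2θ • C₀ A`. Every entry of the integrand is
therefore `(p + q cos 2λr + s sin 2λr) e^{-2εr}`, whose integral over `(0, ∞)` is the real part
of `∫ (p e^{-ar} + (q - i s) e^{(-a + i b) r}) dr = p / a + (q - i s) / (a - i b)`.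
-/

open Matrix

open Set Real MeasureTheory

theorem exp_smul_matA (θ : ℝ) :
    NormedSpace.exp (θ • matA) = !![cos θ, sin θ; -sin θ, cos θ] := by
  let f := (Algebra.leftMulMatrix Complex.basisOneI).toRingHom
  have hf : Continuous f :=
    (Algebra.leftMulMatrix Complex.basisOneI).toLinearMap.continuous_of_finiteDimensional
  have hθ : θ • matA = f (-θ * Complex.I) := by
    simp only [f, AlgHom.toRingHom_eq_coe, RingHom.coe_coe, Algebra.leftMulMatrix_complex]
    ext i j; fin_cases i <;> fin_cases j <;> simp [matA]
  -- `map_exp` wants a normed codomain; any norm inducing the product topology will do.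
  have hexp : NormedSpace.exp (f (-θ * Complex.I)) = f (NormedSpace.exp (-θ * Complex.I)) :=
    let _ := Matrix.linftyOpNormedRing (n := Fin 2) (α := ℝ)
    (NormedSpace.map_exp f hf _).symm
  rw [hθ, hexp, ← Complex.exp_eq_exp_ℂ, Complex.exp_mul_I]
  simp only [f, AlgHom.toRingHom_eq_coe, RingHom.coe_coe, Algebra.leftMulMatrix_complex]
  ext i j
  fin_cases i <;> fin_cases j <;>
    simp [← Complex.ofReal_neg, Complex.cos_ofReal_re, Complex.sin_ofReal_re]

theorem integral_Ioi_trig_mul_exp_neg {a : ℝ} (ha : 0 < a) (b p q s : ℝ) :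
    ∫ r in Ioi (0 : ℝ), (p + q * cos (b * r) + s * sin (b * r)) * exp (-(a * r)) =
      p / a + (q * a + s * b) / (a ^ 2 + b ^ 2) := by
  set z : ℂ := -a + b * Complex.I
  have hz : z.re < 0 := by simp [z, ha]
  have hre : ∀ r : ℝ, (p + q * cos (b * r) + s * sin (b * r)) * exp (-(a * r)) =
      RCLike.re ((p : ℂ) * Complex.exp (-a * r) + (q - s * Complex.I) * Complex.exp (z * r)) := by
    intro r
    simp only [z, RCLike.re_to_complex, Complex.add_re, Complex.add_im, Complex.sub_re,
      Complex.sub_im, Complex.mul_re, Complex.mul_im, Complex.neg_re, Complex.neg_im,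
      Complex.exp_re, Complex.exp_im, Complex.ofReal_re, Complex.ofReal_im, Complex.I_re,
      Complex.I_im, mul_zero, zero_mul, neg_zero, add_zero, zero_add, sub_zero, mul_one, neg_mul,
      cos_zero]
    ring
  have ha' : (-(a : ℂ)).re < 0 := by simpa using ha
  have h₁ := (integrableOn_exp_mul_complex_Ioi ha' 0).const_mul (p : ℂ)
  have h₂ := (integrableOn_exp_mul_complex_Ioi hz 0).const_mul (q - s * Complex.I)
  simp_rw [hre]
  rw [integral_re (h₁.fun_add h₂), integral_add h₁ h₂, integral_const_mul, integral_const_mul,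
    integral_exp_mul_complex_Ioi ha', integral_exp_mul_complex_Ioi hz]
  simp only [z, Complex.ofReal_zero, mul_zero, Complex.exp_zero, RCLike.re_to_complex,
    Complex.add_re, Complex.add_im, Complex.sub_re, Complex.sub_im, Complex.mul_re, Complex.mul_im,
    Complex.div_re, Complex.div_im, Complex.neg_re, Complex.neg_im, Complex.one_re, Complex.one_im,
    Complex.ofReal_re, Complex.ofReal_im, Complex.I_re, Complex.I_im, Complex.normSq_apply,
    neg_zero, sub_zero, zero_sub, sub_self, mul_one, one_mul, zero_mul, add_zero, zero_add,
    zero_div, mul_neg, neg_mul, neg_neg]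
  field_simp
  ring

theorem exp_neg_smul_matA_mul_mul_exp_smul_matA {C : Matrix (Fin 2) (Fin 2) ℝ} (hC : C.IsSymm)
    (θ : ℝ) :
    NormedSpace.exp (-θ • matA) * C * NormedSpace.exp (θ • matA) =
      (C.trace / 2) • 1 + cos (2 * θ) • (C - (C.trace / 2) • 1) +
        sin (2 * θ) • ((C - (C.trace / 2) • 1) * matA) := by
  have hC10 : C 1 0 = C 0 1 := hC.apply 0 1
  rw [exp_smul_matA, exp_smul_matA, cos_two_mul, sin_two_mul, C.eta_fin_two]
  ext i j
  fin_cases i <;> fin_cases j <;>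
    simp only [Fin.zero_eta, Fin.mk_one, Fin.isValue, matA, trace_fin_two, mul_apply,
      Fin.sum_univ_two, Matrix.add_apply, Matrix.sub_apply, Matrix.smul_apply, smul_eq_mul,
      one_apply_eq, one_apply_ne, ne_eq, zero_ne_one, one_ne_zero, not_false_eq_true, of_apply,
      cons_val_zero, cons_val_one, cos_neg, sin_neg, hC10] <;>
    grind [sin_sq_add_cos_sq]

/-- Let `ε > 0`, `λ ∈ ℝ`, and `C = [[a₁, a₀], [a₀, a₂]]` symmetric; with
`β₀ = (a₁+a₂)/4`, `β₁ = (a₁−a₂)/4`, `β₂ = a₀/2`, the matrix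
`J^ε := ∫₀^∞ exp(-λrA)·C·exp(λrA)·e^{-2εr} dr` has the stated entries. -/
theorem J_eps_entries (ε : ℝ) (hε : 0 < ε) (lam : ℝ) (a₀ a₁ a₂ : ℝ)
    (C : Matrix (Fin 2) (Fin 2) ℝ) (hC : C = !![a₁, a₀; a₀, a₂])
    (β₀ β₁ β₂ : ℝ) (hβ₀ : β₀ = (a₁ + a₂) / 4) (hβ₁ : β₁ = (a₁ - a₂) / 4)
    (hβ₂ : β₂ = a₀ / 2)
    (J : Matrix (Fin 2) (Fin 2) ℝ)
    (hJ : J = Matrix.of (fun i j =>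
      ∫ r in Set.Ioi (0 : ℝ),
        (NormedSpace.exp (-(lam * r) • matA) * C *
          NormedSpace.exp ((lam * r) • matA)) i j * Real.exp (-(2 * ε * r)))) :
    J 0 0 = β₀ / ε + β₁ * ε / (lam ^ 2 + ε ^ 2) - β₂ * lam / (lam ^ 2 + ε ^ 2) ∧
    J 1 1 = β₀ / ε - β₁ * ε / (lam ^ 2 + ε ^ 2) + β₂ * lam / (lam ^ 2 + ε ^ 2) ∧
    J 0 1 = β₁ * lam / (lam ^ 2 + ε ^ 2) + β₂ * ε / (lam ^ 2 + ε ^ 2) ∧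
    J 1 0 = β₁ * lam / (lam ^ 2 + ε ^ 2) + β₂ * ε / (lam ^ 2 + ε ^ 2) := by
  have hsymm : C.IsSymm := hC ▸ IsSymm.ext fun i j => by fin_cases i <;> fin_cases j <;> rfl
  set C₀ := C - (C.trace / 2) • (1 : Matrix (Fin 2) (Fin 2) ℝ) with hC₀
  have hentry : ∀ i j, J i j = C.trace / 2 * (1 : Matrix (Fin 2) (Fin 2) ℝ) i j / (2 * ε) +
      (C₀ i j * (2 * ε) + (C₀ * matA) i j * (2 * lam)) / ((2 * ε) ^ 2 + (2 * lam) ^ 2) := by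
    intro i j
    rw [hJ, of_apply, ← integral_Ioi_trig_mul_exp_neg (by positivity)]
    congr 1 with r
    rw [exp_neg_smul_matA_mul_mul_exp_smul_matA hsymm, ← hC₀]
    simp only [Matrix.add_apply, Matrix.smul_apply, smul_eq_mul, mul_assoc 2 lam r]
    ring
  subst hC hβ₀ hβ₁ hβ₂
  refine ⟨?_, ?_, ?_, ?_⟩ <;> rw [hentry] <;>
    simp only [C₀, matA, trace_fin_two, mul_apply, Fin.sum_univ_two, Matrix.sub_apply,
      Matrix.smul_apply, smul_eq_mul, one_apply_eq, one_apply_ne, ne_eq, zero_ne_one, one_ne_zero,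
      not_false_eq_true, of_apply, cons_val', cons_val_zero, cons_val_one, cons_val_fin_one,
      Fin.isValue] <;>
    field_simp <;> ring
end

section
/- Let λ : ℝ² → ℝ be differentiable, let σ : ℝ² → ℝ^{2×2}, and fix q ∈ ℝ² with λ(q) > 0. Then there exist a 2×2 matrix M(q), namely M(q) = λ(q)^{-3}·[[2β₀(q)−β₁(q), −β₂(q)], [−β₂(q), 2β₀(q)+β₁(q)]], and for each ε > 0 a 2×2 matrix R^ε(q) such that the noise-induced drift satisfies S^ε(q) = (1/ε)·(β₀(q)/λ(q)²)·∇⊥λ(q) − M(q)·∇λ(q) + R^ε(q)·∇λ(q) for every ε > 0, and sup_{ε > 0} ε^{-1}·‖R^ε(q)‖ < ∞. -/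
/-! Since `Λ_ε(q)⁻¹` depends on `q` only through `t = λ(q)`, the chain rule gives
`∂ᵢ(Λ_ε⁻¹)_{jl} = K_{jl} ∂ᵢλ` with `K = d/dt (tA + εI)⁻¹ = -(tA + εI)⁻¹ A (tA + εI)⁻¹`,
so `S^ε = (K J^ε) ∇λ`. The product `K J^ε` is an explicit rational matrix in `(λ, ε)`: its
`1/ε` part is `(β₀/λ²) A` (and `A ∇λ = ∇⊥λ`), its `ε⁰` part is `-M`, and what is left has
entries that are combinations of the `βₖ` with rational coefficients vanishing at `ε = 0`,
each bounded by `3ε/λ⁴`. -/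

open Matrix

/-- The entrywise form of `Λ_ε(q)⁻¹ = (λ(q)²+ε²)⁻¹·[[ε, -λ(q)], [λ(q), ε]]`,
as a matrix-valued function of `q`. -/
noncomputable def LamInv (lam : (Fin 2 → ℝ) → ℝ) (ε : ℝ) (x : Fin 2 → ℝ) :
    Matrix (Fin 2) (Fin 2) ℝ :=
  ((lam x) ^ 2 + ε ^ 2)⁻¹ • !![ε, -(lam x); lam x, ε]

/-- The matrix `J^ε(q)` with the explicit entries computed from the Lyapunov
equation. -/
noncomputable def Jmat (β₀ β₁ β₂ lam ε : ℝ) : Matrix (Fin 2) (Fin 2) ℝ :=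
  !![β₀ / ε + β₁ * ε / (lam ^ 2 + ε ^ 2) - β₂ * lam / (lam ^ 2 + ε ^ 2),
     β₁ * lam / (lam ^ 2 + ε ^ 2) + β₂ * ε / (lam ^ 2 + ε ^ 2);
     β₁ * lam / (lam ^ 2 + ε ^ 2) + β₂ * ε / (lam ^ 2 + ε ^ 2),
     β₀ / ε - β₁ * ε / (lam ^ 2 + ε ^ 2) + β₂ * lam / (lam ^ 2 + ε ^ 2)]

/-- The matrix `M(q) = λ(q)⁻³·[[2β₀−β₁, −β₂], [−β₂, 2β₀+β₁]]`. -/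
noncomputable def Mmat (β₀ β₁ β₂ lam : ℝ) : Matrix (Fin 2) (Fin 2) ℝ :=
  (lam ^ 3)⁻¹ • !![2 * β₀ - β₁, -β₂; -β₂, 2 * β₀ + β₁]

noncomputable def lamInvDeriv (t ε : ℝ) : Matrix (Fin 2) (Fin 2) ℝ :=
  ((t ^ 2 + ε ^ 2) ^ 2)⁻¹ • !![-2 * t * ε, t ^ 2 - ε ^ 2; ε ^ 2 - t ^ 2, -2 * t * ε]

theorem hasDerivAt_lamInv_apply {t ε : ℝ} (h : t ^ 2 + ε ^ 2 ≠ 0) (j l : Fin 2) :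
    HasDerivAt (fun s : ℝ => ((s ^ 2 + ε ^ 2)⁻¹ • !![ε, -s; s, ε] : Matrix (Fin 2) (Fin 2) ℝ) j l)
      (lamInvDeriv t ε j l) t := by
  have hinv : HasDerivAt (fun s : ℝ => (s ^ 2 + ε ^ 2)⁻¹) (-(2 * t) / (t ^ 2 + ε ^ 2) ^ 2) t :=
    (((hasDerivAt_pow 2 t).add_const (ε ^ 2)).fun_inv h).congr_deriv (by ring)
  have hmul : HasDerivAt (fun s : ℝ => (s ^ 2 + ε ^ 2)⁻¹ * s)
      (((t ^ 2 + ε ^ 2) ^ 2)⁻¹ * (ε ^ 2 - t ^ 2)) t :=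
    (hinv.fun_mul (hasDerivAt_id' t)).congr_deriv (by field_simp; ring)
  fin_cases j <;> fin_cases l <;>
    simp only [lamInvDeriv, Matrix.smul_apply, smul_eq_mul, Fin.isValue, of_apply, cons_val',
      cons_val_zero, cons_val_one, cons_val_fin_one, Fin.zero_eta, Fin.mk_one, mul_neg]
  · exact (hinv.mul_const ε).congr_deriv (by field_simp)
  · exact hmul.fun_neg.congr_deriv (by ring)
  · exact hmul
  · exact (hinv.mul_const ε).congr_deriv (by field_simp)

theorem hasFDerivAt_lamInv_apply {lam : (Fin 2 → ℝ) → ℝ} {L : (Fin 2 → ℝ) →L[ℝ] ℝ}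
    {q : Fin 2 → ℝ} (hlam : HasFDerivAt lam L q) {ε : ℝ} (h : lam q ^ 2 + ε ^ 2 ≠ 0)
    (j l : Fin 2) :
    HasFDerivAt (fun x => LamInv lam ε x j l) (lamInvDeriv (lam q) ε j l • L) q :=
  (hasDerivAt_lamInv_apply h j l).comp_hasFDerivAt q hlam

theorem lamInv_drift_eq_mulVec {lam : (Fin 2 → ℝ) → ℝ} {q : Fin 2 → ℝ}
    (hlam : DifferentiableAt ℝ lam q) {ε : ℝ} (h : lam q ^ 2 + ε ^ 2 ≠ 0)
    (J : Matrix (Fin 2) (Fin 2) ℝ) :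
    (fun j => ∑ i : Fin 2, ∑ l : Fin 2,
      fderiv ℝ (fun x => LamInv lam ε x j l) q (Pi.single i 1) * J l i)
      = (lamInvDeriv (lam q) ε * J) *ᵥ fun i => fderiv ℝ lam q (Pi.single i 1) := by
  ext j
  simp only [(hasFDerivAt_lamInv_apply hlam.hasFDerivAt h j _).fderiv, mulVec, dotProduct,
    mul_apply, _root_.smul_apply, smul_eq_mul, Fin.sum_univ_two]
  ring

noncomputable def remainderCoeff₀ (c ε : ℝ) : ℝ :=
  2 * ε ^ 2 * (2 * c ^ 2 + ε ^ 2) / (c ^ 3 * (c ^ 2 + ε ^ 2) ^ 2)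

noncomputable def remainderCoeff₁ (c ε : ℝ) : ℝ :=
  ε * (3 * c ^ 2 + ε ^ 2) / (c ^ 2 * (c ^ 2 + ε ^ 2) ^ 2)

noncomputable def remainderCoeff₂ (c ε : ℝ) : ℝ :=
  ε * (ε ^ 2 - 3 * c ^ 2) / (c ^ 2 + ε ^ 2) ^ 3

noncomputable def remainderCoeff₃ (c ε : ℝ) : ℝ :=
  ε ^ 2 * (6 * c ^ 4 + 3 * c ^ 2 * ε ^ 2 + ε ^ 4) / (c ^ 3 * (c ^ 2 + ε ^ 2) ^ 3)

noncomputable def driftRemainder (β₀ β₁ β₂ c ε : ℝ) : Matrix (Fin 2) (Fin 2) ℝ :=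
  β₀ • !![remainderCoeff₀ c ε, -remainderCoeff₁ c ε; remainderCoeff₁ c ε, remainderCoeff₀ c ε]
    + β₁ • !![-remainderCoeff₃ c ε, remainderCoeff₂ c ε; remainderCoeff₂ c ε, remainderCoeff₃ c ε]
    + β₂ • !![-remainderCoeff₂ c ε, -remainderCoeff₃ c ε; -remainderCoeff₃ c ε, remainderCoeff₂ c ε]

theorem lamInvDeriv_mul_Jmat {c ε : ℝ} (hc : c ≠ 0) (hε : ε ≠ 0) (β₀ β₁ β₂ : ℝ) :
    lamInvDeriv c ε * Jmat β₀ β₁ β₂ c ε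
      = (1 / ε * (β₀ / c ^ 2)) • !![0, 1; -1, 0] - Mmat β₀ β₁ β₂ c
        + driftRemainder β₀ β₁ β₂ c ε := by
  have hD : c ^ 2 + ε ^ 2 ≠ 0 := by positivity
  ext i j
  fin_cases i <;> fin_cases j <;>
    simp only [lamInvDeriv, Jmat, Mmat, driftRemainder, remainderCoeff₀, remainderCoeff₁,
      remainderCoeff₂, remainderCoeff₃, mul_apply, Fin.sum_univ_two, Matrix.add_apply,
      Matrix.sub_apply, Matrix.smul_apply, smul_eq_mul, Fin.isValue, of_apply, cons_val',
      cons_val_zero, cons_val_one, cons_val_fin_one, Fin.zero_eta, Fin.mk_one] <;>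
    field_simp <;> ring

theorem abs_mul_add_mul_add_mul_le {a b d x y z B : ℝ} (hx : |x| ≤ B) (hy : |y| ≤ B)
    (hz : |z| ≤ B) : |a * x + b * y + d * z| ≤ (|a| + |b| + |d|) * B := by
  calc |a * x + b * y + d * z| ≤ |a| * |x| + |b| * |y| + |d| * |z| := by
        simpa only [abs_mul] using abs_add_three (a * x) (b * y) (d * z)
    _ ≤ |a| * B + |b| * B + |d| * B := by gcongr
    _ = (|a| + |b| + |d|) * B := by ring

section RemainderBounds

variable {c ε : ℝ}

theorem abs_remainderCoeff₀_le (hc : 0 < c) (hε : 0 < ε) :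
    |remainderCoeff₀ c ε| ≤ 3 / c ^ 4 * ε := by
  rw [remainderCoeff₀, abs_of_nonneg (by positivity), div_mul_eq_mul_div,
    div_le_div_iff₀ (by positivity) (by positivity)]
  have key : 2 * ε * c * (2 * c ^ 2 + ε ^ 2) ≤ 3 * (c ^ 2 + ε ^ 2) ^ 2 := by
    nlinarith [sq_nonneg (c - ε), sq_nonneg (ε * (c - ε)), sq_nonneg (c * (c - ε)),
      mul_pos hc hε]
  nlinarith [mul_le_mul_of_nonneg_left key (show (0:ℝ) ≤ ε * c ^ 3 by positivity)]

theorem abs_remainderCoeff₁_le (hc : 0 < c) (hε : 0 < ε) :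
    |remainderCoeff₁ c ε| ≤ 3 / c ^ 4 * ε := by
  rw [remainderCoeff₁, abs_of_nonneg (by positivity), div_mul_eq_mul_div,
    div_le_div_iff₀ (by positivity) (by positivity)]
  nlinarith [mul_pos hc hε, sq_nonneg (c * ε), pow_pos hε 2, pow_pos hc 2, pow_pos hε 4]

theorem abs_remainderCoeff₂_le (hc : 0 < c) (hε : 0 < ε) :
    |remainderCoeff₂ c ε| ≤ 3 / c ^ 4 * ε := by
  have hD : 0 < c ^ 2 + ε ^ 2 := by positivity
  rw [remainderCoeff₂, abs_div, abs_of_pos (pow_pos hD 3), abs_mul, abs_of_pos hε,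
    div_mul_eq_mul_div, div_le_div_iff₀ (by positivity) (by positivity)]
  have habs : |ε ^ 2 - 3 * c ^ 2| ≤ 3 * (c ^ 2 + ε ^ 2) := by
    rw [abs_le]; constructor <;> nlinarith [sq_nonneg c, sq_nonneg ε]
  have hc4 : c ^ 4 ≤ (c ^ 2 + ε ^ 2) ^ 2 := by nlinarith [sq_nonneg ε, sq_nonneg c]
  calc ε * |ε ^ 2 - 3 * c ^ 2| * c ^ 4
      ≤ ε * (3 * (c ^ 2 + ε ^ 2)) * (c ^ 2 + ε ^ 2) ^ 2 := by gcongr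
    _ = 3 * ε * (c ^ 2 + ε ^ 2) ^ 3 := by ring

theorem abs_remainderCoeff₃_le (hc : 0 < c) (hε : 0 < ε) :
    |remainderCoeff₃ c ε| ≤ 3 / c ^ 4 * ε := by
  rw [remainderCoeff₃, abs_of_nonneg (by positivity), div_mul_eq_mul_div,
    div_le_div_iff₀ (by positivity) (by positivity)]
  have key : ε * c * (6 * c ^ 4 + 3 * c ^ 2 * ε ^ 2 + ε ^ 4) ≤ 3 * (c ^ 2 + ε ^ 2) ^ 3 := by
    nlinarith [mul_nonneg (mul_nonneg (sq_nonneg c) (sq_nonneg c)) (sq_nonneg (c - ε)),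
      mul_nonneg (mul_nonneg (sq_nonneg c) (sq_nonneg ε)) (sq_nonneg (c - ε)),
      mul_nonneg (mul_nonneg (sq_nonneg ε) (sq_nonneg ε)) (sq_nonneg (c - ε))]
  nlinarith [mul_le_mul_of_nonneg_left key (show (0:ℝ) ≤ ε * c ^ 3 by positivity)]

theorem abs_driftRemainder_apply_le (hc : 0 < c) (hε : 0 < ε) (β₀ β₁ β₂ : ℝ) (i j : Fin 2) :
    |driftRemainder β₀ β₁ β₂ c ε i j| ≤ (|β₀| + |β₁| + |β₂|) * (3 / c ^ 4) * ε := by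
  have h₀ := abs_remainderCoeff₀_le hc hε
  have h₁ := abs_remainderCoeff₁_le hc hε
  have h₂ := abs_remainderCoeff₂_le hc hε
  have h₃ := abs_remainderCoeff₃_le hc hε
  rw [mul_assoc]
  fin_cases i <;> fin_cases j
  · simpa [driftRemainder] using abs_mul_add_mul_add_mul_le (a := β₀) (b := β₁) (d := β₂)
      h₀ ((abs_neg _).trans_le h₃) ((abs_neg _).trans_le h₂)
  · simpa [driftRemainder] using abs_mul_add_mul_add_mul_le (a := β₀) (b := β₁) (d := β₂)
      ((abs_neg _).trans_le h₁) h₂ ((abs_neg _).trans_le h₃)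
  · simpa [driftRemainder] using abs_mul_add_mul_add_mul_le (a := β₀) (b := β₁) (d := β₂)
      h₁ h₂ ((abs_neg _).trans_le h₃)
  · simpa [driftRemainder] using abs_mul_add_mul_add_mul_le (a := β₀) (b := β₁) (d := β₂)
      h₀ h₃ h₂

end RemainderBounds

theorem noise_induced_drift_decomposition_exists_general
    (lam : (Fin 2 → ℝ) → ℝ) (hdiff : Differentiable ℝ lam)
    (q : Fin 2 → ℝ) (hpos : 0 < lam q)
    (β₀ β₁ β₂ : ℝ)
    (S : ℝ → Fin 2 → ℝ)
    (hS : ∀ ε : ℝ, S ε = fun j => ∑ i : Fin 2, ∑ l : Fin 2,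
      fderiv ℝ (fun x => LamInv lam ε x j l) q (Pi.single i 1) *
        Jmat β₀ β₁ β₂ (lam q) ε l i)
    (grad gradPerp : Fin 2 → ℝ)
    (hgrad : grad = fun i => fderiv ℝ lam q (Pi.single i 1))
    (hgradPerp : gradPerp = ![grad 1, -grad 0]) :
    ∃ R : ℝ → Matrix (Fin 2) (Fin 2) ℝ,
      (∀ ε : ℝ, 0 < ε → ∀ j : Fin 2,
        S ε j = (1 / ε) * (β₀ / (lam q) ^ 2) * gradPerp j
          - (Mmat β₀ β₁ β₂ (lam q)).mulVec grad j
          + (R ε).mulVec grad j) ∧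
      ∃ C : ℝ, ∀ ε : ℝ, 0 < ε → ∀ i j : Fin 2, |R ε i j| ≤ C * ε := by
  refine ⟨driftRemainder β₀ β₁ β₂ (lam q), fun ε hε j => ?_,
    (|β₀| + |β₁| + |β₂|) * (3 / lam q ^ 4), fun ε hε => abs_driftRemainder_apply_le hpos hε _ _ _⟩
  have hS_mulVec : S ε = (lamInvDeriv (lam q) ε * Jmat β₀ β₁ β₂ (lam q) ε) *ᵥ grad := by
    rw [hS, hgrad]
    exact lamInv_drift_eq_mulVec (hdiff q) (by positivity) _
  have hgradPerp_mulVec : gradPerp = !![0, 1; -1, 0] *ᵥ grad := by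
    rw [hgradPerp]
    ext j
    fin_cases j <;> simp [mulVec, dotProduct]
  rw [hS_mulVec, hgradPerp_mulVec, lamInvDeriv_mul_Jmat hpos.ne' hε.ne', add_mulVec, sub_mulVec,
    smul_mulVec]
  rfl

/-- There exist a matrix `M(q)` (the explicit `Mmat`) and, for each `ε > 0`, a
matrix `R^ε(q)` such that the noise-induced drift satisfies
`S^ε(q) = (1/ε)·(β₀/λ(q)²)·∇⊥λ(q) − M(q)·∇λ(q) + R^ε(q)·∇λ(q)` for every
`ε > 0`, with `sup_{ε>0} ε⁻¹·‖R^ε(q)‖ < ∞`. -/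
theorem noise_induced_drift_decomposition_exists
    (lam : (Fin 2 → ℝ) → ℝ) (hdiff : Differentiable ℝ lam)
    (σ : (Fin 2 → ℝ) → Matrix (Fin 2) (Fin 2) ℝ)
    (q : Fin 2 → ℝ) (hpos : 0 < lam q)
    (a₀ a₁ a₂ : ℝ) (ha : σ q * (σ q)ᵀ = !![a₁, a₀; a₀, a₂])
    (β₀ β₁ β₂ : ℝ) (hβ₀ : β₀ = (a₁ + a₂) / 4) (hβ₁ : β₁ = (a₁ - a₂) / 4)
    (hβ₂ : β₂ = a₀ / 2)
    (S : ℝ → Fin 2 → ℝ)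
    (hS : ∀ ε : ℝ, S ε = fun j => ∑ i : Fin 2, ∑ l : Fin 2,
      fderiv ℝ (fun x => LamInv lam ε x j l) q (Pi.single i 1) *
        Jmat β₀ β₁ β₂ (lam q) ε l i)
    (grad gradPerp : Fin 2 → ℝ)
    (hgrad : grad = fun i => fderiv ℝ lam q (Pi.single i 1))
    (hgradPerp : gradPerp = ![grad 1, -grad 0]) :
    ∃ R : ℝ → Matrix (Fin 2) (Fin 2) ℝ,
      (∀ ε : ℝ, 0 < ε → ∀ j : Fin 2,
        S ε j = (1 / ε) * (β₀ / (lam q) ^ 2) * gradPerp j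
          - (Mmat β₀ β₁ β₂ (lam q)).mulVec grad j
          + (R ε).mulVec grad j) ∧
      ∃ C : ℝ, ∀ ε : ℝ, 0 < ε → ∀ i j : Fin 2, |R ε i j| ≤ C * ε :=
  noise_induced_drift_decomposition_exists_general lam hdiff q hpos β₀ β₁ β₂ S hS grad gradPerp
    hgrad hgradPerp
end
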